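/- arXiv:1805.03405 — 2 statements merged into one kernel-verified Lean document; each statement's English description precedes it below -/
import Mathlib

section
/- For every finite simple graph G, the following statements are equivalent: (1) G is a threshold graph; (2) the vertex cover hypergraph VC(G) is 1-Sperner; (3) the vertex cover hypergraph VC(G) is a threshold hypergraph; (4) the vertex cover hypergraph VC(G) is 2-asummable. -/
/-!
A set is dependent in `VC(G)` iff it is a vertex cover, i.e. iff its complement is independent, so
replacing the threshold `t` by `w(V) - t` moves between threshold realisations of `G` and of
`VC(G)`; and a threshold hypergraph is 2-asummable because weight is additive in `χ`.

The other implications go through alternating 4-cycles (edges `ab`, `cd`, non-edges `ac`, `bd`).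
Such a cycle gives the 2-summable configuration `{a,b}ᶜ + {c,d}ᶜ = {a,c}ᶜ + {b,d}ᶜ`, and the
complements of maximal independent sets through `{a, c}` and `{b, d}` are minimal covers that
differ in at least two vertices on each side. Without such a cycle, every nonempty vertex set
contains a vertex isolated or dominating within it, which builds threshold weights inductively
(Chvátal–Hammer); and for minimal covers `e ≠ f` the sets `e \ f`, `f \ e` are independent and
dominate each other, so they cannot both have two elements.
-/

open Finset

open scoped Classical

/-- A hypergraph (given by its set of hyperedges, each a finite set of vertices)
is 1-Sperner if every two distinct hyperedges `e` and `f` satisfy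
`min |e \ f| |f \ e| = 1`. -/
def OneSperner {V : Type*} [DecidableEq V] (E : Set (Finset V)) : Prop :=
  ∀ e ∈ E, ∀ f ∈ E, e ≠ f → min (e \ f).card (f \ e).card = 1

/-- A set of vertices `X` is dependent in the hypergraph with hyperedge set `E`
if it contains some hyperedge; it is independent otherwise. -/
def HypDep {V : Type*} (E : Set (Finset V)) (X : Finset V) : Prop :=
  ∃ e ∈ E, e ⊆ X

/-- A hypergraph is threshold if there are nonnegative integer vertex weights and a
threshold such that a vertex set has weight at least the threshold iff it contains
a hyperedge. -/
def HypThreshold {V : Type*} [Fintype V] (E : Set (Finset V)) : Prop :=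
  ∃ (w : V → ℕ) (t : ℕ), ∀ X : Finset V, (t ≤ ∑ x ∈ X, w x) ↔ HypDep E X

/-- The characteristic vector of a finite vertex set. -/
def chiVec {V : Type*} [DecidableEq V] (X : Finset V) : V → ℕ :=
  fun v => if v ∈ X then 1 else 0

/-- A hypergraph is 2-asummable if there are no two independent sets `A₁, A₂`
and two dependent sets `B₁, B₂` with `χ^{A₁} + χ^{A₂} = χ^{B₁} + χ^{B₂}`. -/
def TwoAsummable {V : Type*} [DecidableEq V] (E : Set (Finset V)) : Prop :=
  ¬ ∃ A₁ A₂ B₁ B₂ : Finset V,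
      ¬ HypDep E A₁ ∧ ¬ HypDep E A₂ ∧ HypDep E B₁ ∧ HypDep E B₂ ∧
      ∀ v, chiVec A₁ v + chiVec A₂ v = chiVec B₁ v + chiVec B₂ v

/-- A graph is threshold if there are nonnegative integer vertex weights and a threshold
such that a vertex set has weight at most the threshold iff it is an independent set. -/
def ThresholdGraph {V : Type*} [Fintype V] (G : SimpleGraph V) : Prop :=
  ∃ (w : V → ℕ) (t : ℕ), ∀ X : Finset V,
    ((∑ x ∈ X, w x) ≤ t ↔ ∀ u ∈ X, ∀ v ∈ X, ¬ G.Adj u v)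

/-- A vertex cover of a graph: every edge has an endpoint in the set. -/
def IsVertexCover {V : Type*} (G : SimpleGraph V) (S : Finset V) : Prop :=
  ∀ u v : V, G.Adj u v → u ∈ S ∨ v ∈ S

/-- The vertex cover hypergraph: hyperedges are the inclusion-minimal vertex covers. -/
def VCHyp {V : Type*} (G : SimpleGraph V) : Set (Finset V) :=
  {S | IsVertexCover G S ∧ ∀ T : Finset V, IsVertexCover G T → T ⊆ S → T = S}

/-- The clique hypergraph: hyperedges are the inclusion-maximal cliques. -/
def CliqueHyp {V : Type*} (G : SimpleGraph V) : Set (Finset V) :=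
  {S | G.IsClique (S : Set V) ∧ ∀ T : Finset V, G.IsClique (T : Set V) → S ⊆ T → T = S}

/-- The closed neighborhood `N[v]` of a vertex, as a finite set. -/
def closedNbhd {V : Type*} [Fintype V] [DecidableEq V] (G : SimpleGraph V)
    [DecidableRel G.Adj] (v : V) : Finset V :=
  insert v (G.neighborFinset v)

/-- The closed neighborhood hypergraph: hyperedges are the inclusion-minimal sets of
the form `N[v]`. -/
def NHyp {V : Type*} [Fintype V] [DecidableEq V] (G : SimpleGraph V)
    [DecidableRel G.Adj] : Set (Finset V) :=
  {S | (∃ v : V, S = closedNbhd G v) ∧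
       ∀ v : V, closedNbhd G v ⊆ S → closedNbhd G v = S}

/-- A dominating set: every vertex is in the set or has a neighbor in it. -/
def IsDomSet {V : Type*} (G : SimpleGraph V) (D : Finset V) : Prop :=
  ∀ v : V, v ∈ D ∨ ∃ u ∈ D, G.Adj u v

/-- The dominating set hypergraph: hyperedges are the inclusion-minimal dominating sets. -/
def DomHyp {V : Type*} (G : SimpleGraph V) : Set (Finset V) :=
  {D | IsDomSet G D ∧ ∀ T : Finset V, IsDomSet G T → T ⊆ D → T = D}

/-- A graph is domishold if there are nonnegative integer vertex weights and a threshold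
such that a vertex set has weight at least the threshold iff it is a dominating set. -/
def Domishold {V : Type*} [Fintype V] (G : SimpleGraph V) : Prop :=
  ∃ (w : V → ℕ) (t : ℕ), ∀ X : Finset V, (t ≤ ∑ x ∈ X, w x) ↔ IsDomSet G X

/-- `(K, I)` is a split partition of `G`: `K` is a clique, `I` an independent set,
they are disjoint and cover all vertices. -/
def IsSplitPartition {V : Type*} [Fintype V] (G : SimpleGraph V) (K I : Finset V) : Prop :=
  Disjoint K I ∧ K ∪ I = Finset.univ ∧ G.IsClique (K : Set V) ∧
    ∀ u ∈ I, ∀ v ∈ I, ¬ G.Adj u v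

/-- The labeled split graph `(G, K, I)` is clique-Sperner: for `u, v ∈ K`,
`N(u) ∩ I ⊆ N(v) ∩ I` implies `u = v`. -/
def CliqueSperner {V : Type*} (G : SimpleGraph V) (K I : Finset V) : Prop :=
  ∀ u ∈ K, ∀ v ∈ K,
    G.neighborSet u ∩ (I : Set V) ⊆ G.neighborSet v ∩ (I : Set V) → u = v

/-- The labeled split graph `(G, K, I)` is independent-Sperner: for `u, v ∈ I`,
`N(u) ⊆ N(v)` implies `u = v`. -/
def IndependentSperner {V : Type*} (G : SimpleGraph V) (K I : Finset V) : Prop :=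
  ∀ u ∈ I, ∀ v ∈ I, G.neighborSet u ⊆ G.neighborSet v → u = v

/-- `(A, B)` is a bipartition of `G` into two disjoint independent sets covering
all vertices. -/
def IsBipartition {V : Type*} [Fintype V] (G : SimpleGraph V) (A B : Finset V) : Prop :=
  Disjoint A B ∧ A ∪ B = Finset.univ ∧
    (∀ u ∈ A, ∀ v ∈ A, ¬ G.Adj u v) ∧ (∀ u ∈ B, ∀ v ∈ B, ¬ G.Adj u v)

/-- The labeled bigraph `(G, A, B)` is right-Sperner: for `u, v ∈ B`,
`N(u) ⊆ N(v)` implies `u = v`. -/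
def RightSperner {V : Type*} (G : SimpleGraph V) (A B : Finset V) : Prop :=
  ∀ u ∈ B, ∀ v ∈ B, G.neighborSet u ⊆ G.neighborSet v → u = v

/-- The graph `2P₃`: disjoint union of the paths `0-1-2` and `3-4-5`. -/
def twoP3 : SimpleGraph (Fin 6) :=
  SimpleGraph.fromRel (fun u v =>
    (u, v) ∈ ([(0,1),(1,2),(3,4),(4,5)] : List (Fin 6 × Fin 6)))

/-- The graph `H`: obtained from `2P₃` (paths `0-1-2` and `3-4-5`) by adding the
edge `1-4` between the two middle vertices. -/
def graphH : SimpleGraph (Fin 6) :=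
  SimpleGraph.fromRel (fun u v =>
    (u, v) ∈ ([(0,1),(1,2),(3,4),(4,5),(1,4)] : List (Fin 6 × Fin 6)))

/-- The domination number: minimum size of a dominating set. -/
noncomputable def gamma {W : Type*} [Fintype W] (G : SimpleGraph W) : ℕ :=
  sInf {n | ∃ D : Finset W, IsDomSet G D ∧ D.card = n}

/-- The total domination number: minimum size of a total dominating set. -/
noncomputable def gammaT {W : Type*} [Fintype W] (G : SimpleGraph W) : ℕ :=
  sInf {n | ∃ D : Finset W, (∀ v : W, ∃ u ∈ D, G.Adj u v) ∧ D.card = n}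

/-- The connected domination number: minimum size of a connected dominating set. -/
noncomputable def gammaC {W : Type*} [Fintype W] (G : SimpleGraph W) : ℕ :=
  sInf {n | ∃ D : Finset W, IsDomSet G D ∧ (G.induce (D : Set W)).Connected ∧ D.card = n}

/-- The co-occurrence graph of a hypergraph: two distinct vertices are adjacent iff
some hyperedge contains both. -/
def coOccurrenceGraph {W : Type*} (E : Set (Finset W)) : SimpleGraph W where
  Adj u v := u ≠ v ∧ ∃ e ∈ E, u ∈ e ∧ v ∈ e
  symm := by
    refine ⟨?_⟩
    rintro u v ⟨h, e, he, hu, hv⟩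
    exact ⟨h.symm, e, he, hv, hu⟩
  loopless := by
    refine ⟨?_⟩
    rintro u ⟨h, -⟩
    exact h rfl

/-- The edge-clique split graph of a hypergraph `(V, E)`: vertex set `E ⊕ V`, the
hyperedges form a clique, the vertices an independent set, and `v ∈ V` is adjacent
to `e ∈ E` iff `v ∈ e`. -/
def edgeCliqueGraph {V : Type*} (E : Finset (Finset V)) :
    SimpleGraph ({e // e ∈ E} ⊕ V) where
  Adj x y :=
    match x, y with
    | Sum.inl e, Sum.inl f => e ≠ f
    | Sum.inl e, Sum.inr v => v ∈ (e : Finset V)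
    | Sum.inr v, Sum.inl e => v ∈ (e : Finset V)
    | Sum.inr _, Sum.inr _ => False
  symm := by
    refine ⟨?_⟩
    rintro (e | u) (f | v) h
    · exact Ne.symm h
    · exact h
    · exact h
    · exact h.elim
  loopless := by
    refine ⟨?_⟩
    rintro (e | v) h
    · exact h rfl
    · exact h


section VertexCovers

variable {V : Type*} {G : SimpleGraph V}

theorem isIndepSet_coe_iff {X : Finset V} :
    G.IsIndepSet (X : Set V) ↔ ∀ u ∈ X, ∀ v ∈ X, ¬ G.Adj u v :=
  ⟨fun h _ hu _ hv huv => h hu hv huv.ne huv, fun h u hu v hv _ => h u hu v hv⟩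

theorem isIndepSet_pair {a c : V} (h : ¬ G.Adj a c) : G.IsIndepSet ({a, c} : Set V) :=
  Set.pairwise_pair.2 fun _ => ⟨h, fun h' => h h'.symm⟩

theorem notMem_of_isIndepSet_of_adj {M : Finset V} (hM : G.IsIndepSet (M : Set V)) {a b : V}
    (ha : a ∈ M) (hab : G.Adj a b) : b ∉ M :=
  fun hb => hM ha hb hab.ne hab

theorem mem_vcHyp_of_minimal {S : Finset V} (h : Minimal (IsVertexCover G) S) : S ∈ VCHyp G :=
  ⟨h.prop, fun _ hT hTS => le_antisymm hTS (h.le_of_le hT hTS)⟩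

theorem hypDep_vcHyp_iff {X : Finset V} : HypDep (VCHyp G) X ↔ IsVertexCover G X := by
  refine ⟨fun ⟨e, he, heX⟩ u v huv => (he.1 u v huv).imp (@heX u) (@heX v), fun hX => ?_⟩
  obtain ⟨e, heX, he⟩ := exists_minimal_le_of_wellFoundedLT _ X hX
  exact ⟨e, mem_vcHyp_of_minimal he, heX⟩

variable [DecidableEq V]

theorem exists_adj_notMem_of_mem_vcHyp {f : Finset V} (hf : f ∈ VCHyp G) {x : V} (hx : x ∈ f) :
    ∃ y ∉ f, G.Adj x y := by
  by_contra! h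
  have hcov : IsVertexCover G (f.erase x) := by
    intro u v huv
    have := hf.1 u v huv
    have := G.ne_of_adj huv
    grind [G.adj_symm]
  have hfx := hf.2 _ hcov (Finset.erase_subset x f)
  rw [← hfx] at hx
  exact Finset.notMem_erase x f hx

theorem sdiff_nonempty_of_mem_vcHyp {e f : Finset V} (hf : f ∈ VCHyp G) (he : e ∈ VCHyp G)
    (hne : e ≠ f) : (e \ f).Nonempty :=
  Finset.sdiff_nonempty.2 fun hef => hne (hf.2 e he.1 hef)

theorem exists_adj_mem_sdiff_of_mem_vcHyp {e f : Finset V} (he : e ∈ VCHyp G)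
    (hf : f ∈ VCHyp G) {x : V} (hx : x ∈ f \ e) : ∃ y ∈ e \ f, G.Adj x y := by
  rw [Finset.mem_sdiff] at hx
  obtain ⟨y, hyf, hxy⟩ := exists_adj_notMem_of_mem_vcHyp hf hx.1
  exact ⟨y, Finset.mem_sdiff.2 ⟨(he.1 x y hxy).resolve_left hx.2, hyf⟩, hxy⟩

variable [Fintype V]

theorem isVertexCover_iff_isIndepSet_compl {S : Finset V} :
    IsVertexCover G S ↔ G.IsIndepSet (↑Sᶜ : Set V) := by
  rw [Finset.coe_compl, SimpleGraph.isIndepSet_compl_iff_isVertexCover]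
  exact ⟨fun h _ _ huv => h _ _ huv, fun h _ _ huv => h huv⟩

theorem compl_mem_vcHyp {M : Finset V}
    (hM : Maximal (fun X : Finset V => G.IsIndepSet (X : Set V)) M) : Mᶜ ∈ VCHyp G := by
  refine ⟨isVertexCover_iff_isIndepSet_compl.2 (by simpa using hM.prop), fun T hT hTM => ?_⟩
  rw [isVertexCover_iff_isIndepSet_compl] at hT
  rw [hM.eq_of_le hT (Finset.subset_compl_comm.1 hTM), compl_compl]

theorem isIndepSet_sdiff_of_isVertexCover {e : Finset V} (he : IsVertexCover G e)
    (X : Finset V) : G.IsIndepSet (↑(X \ e) : Set V) :=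
  (isVertexCover_iff_isIndepSet_compl.1 he).mono (by simp [Finset.sdiff_eq_inter_compl])

end VertexCovers

section Weights

variable {V : Type*} [Fintype V] [DecidableEq V]

theorem exists_sum_le_iff_iff_exists_le_sum_iff_compl (P : Finset V → Prop) (hP : P ∅) :
    (∃ (w : V → ℕ) (t : ℕ), ∀ X, ∑ x ∈ X, w x ≤ t ↔ P X) ↔
      ∃ (w : V → ℕ) (t : ℕ), ∀ X, t ≤ ∑ x ∈ X, w x ↔ P Xᶜ := by
  constructor
  · rintro ⟨w, t, hw⟩
    refine ⟨w, ∑ x, w x - t, fun X => ?_⟩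
    rw [← hw]
    have := Finset.sum_add_sum_compl X w
    omega
  · rintro ⟨w, t, hw⟩
    have ht : t ≤ ∑ x, w x := (hw Finset.univ).2 (by simpa using hP)
    refine ⟨w, ∑ x, w x - t, fun X => ?_⟩
    have hX := hw Xᶜ
    rw [compl_compl] at hX
    rw [← hX]
    have := Finset.sum_add_sum_compl X w
    omega

theorem thresholdGraph_iff_hypThreshold_vcHyp {G : SimpleGraph V} :
    ThresholdGraph G ↔ HypThreshold (VCHyp G) := by
  simp only [HypThreshold, hypDep_vcHyp_iff, isVertexCover_iff_isIndepSet_compl,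
    isIndepSet_coe_iff]
  exact exists_sum_le_iff_iff_exists_le_sum_iff_compl _ (by simp)

theorem sum_chiVec_mul (w : V → ℕ) (X : Finset V) : ∑ v, chiVec X v * w v = ∑ x ∈ X, w x := by
  simp [chiVec, Finset.sum_ite_mem]

theorem HypThreshold.twoAsummable {E : Set (Finset V)} (h : HypThreshold E) : TwoAsummable E := by
  obtain ⟨w, t, hw⟩ := h
  rintro ⟨A₁, A₂, B₁, B₂, hA₁, hA₂, hB₁, hB₂, hχ⟩
  rw [← hw] at hA₁ hA₂ hB₁ hB₂
  have hsum : ∑ x ∈ A₁, w x + ∑ x ∈ A₂, w x = ∑ x ∈ B₁, w x + ∑ x ∈ B₂, w x := by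
    simp only [← sum_chiVec_mul w, ← Finset.sum_add_distrib, ← add_mul, hχ]
  omega

end Weights

/-- The four vertices induce `2K₂`, `P₄` or `C₄`. -/
def HasAltFourCycle {V : Type*} (G : SimpleGraph V) : Prop :=
  ∃ a b c d : V, G.Adj a b ∧ G.Adj c d ∧ a ≠ c ∧ b ≠ d ∧ ¬ G.Adj a c ∧ ¬ G.Adj b d

section AltFourCycle

variable {V : Type*} {G : SimpleGraph V}

theorem hasAltFourCycle_of_one_lt_card {P Q : Finset V} (hP : G.IsIndepSet (P : Set V))
    (hQ : G.IsIndepSet (Q : Set V)) (hPQ : ∀ x ∈ P, ∃ y ∈ Q, G.Adj x y)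
    (hQP : ∀ y ∈ Q, ∃ x ∈ P, G.Adj y x) (hP₂ : 1 < #P) (hQ₂ : 1 < #Q) : HasAltFourCycle G := by
  obtain ⟨b, hb, b', hb', hbb'⟩ := Finset.one_lt_card.1 hQ₂
  obtain ⟨a, ha, hba⟩ := hQP b hb
  obtain ⟨a', ha', hb'a'⟩ := hQP b' hb'
  by_cases haa' : a = a'
  · subst haa'
    obtain ⟨c, hc, hca⟩ := Finset.exists_mem_ne hP₂ a
    obtain ⟨d, hd, hcd⟩ := hPQ c hc
    by_cases hdb : d = b
    · subst hdb
      exact ⟨a, b', c, d, hb'a'.symm, hcd, hca.symm, hbb'.symm, hP ha hc hca.symm,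
        hQ hb' hd hbb'.symm⟩
    · exact ⟨a, b, c, d, hba.symm, hcd, hca.symm, Ne.symm hdb, hP ha hc hca.symm,
        hQ hb hd (Ne.symm hdb)⟩
  · exact ⟨a, b, a', b', hba.symm, hb'a'.symm, haa', hbb', hP ha ha' haa', hQ hb hb' hbb'⟩

variable [Fintype V] [DecidableEq V]

theorem not_hasAltFourCycle_of_twoAsummable (h : TwoAsummable (VCHyp G)) :
    ¬ HasAltFourCycle G := by
  rintro ⟨a, b, c, d, hab, hcd, hac, hbd, hnac, hnbd⟩
  have hab' : a ≠ b := G.ne_of_adj hab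
  have hcd' : c ≠ d := G.ne_of_adj hcd
  have had : a ≠ d := by rintro rfl; exact hnac hcd.symm
  have hbc : b ≠ c := by rintro rfl; exact hnbd hcd
  refine h ⟨{a, b}ᶜ, {c, d}ᶜ, {a, c}ᶜ, {b, d}ᶜ, ?_, ?_, ?_, ?_, fun v => ?_⟩
  · rw [hypDep_vcHyp_iff]
    intro hcov
    simpa using hcov a b hab
  · rw [hypDep_vcHyp_iff]
    intro hcov
    simpa using hcov c d hcd
  · simpa [hypDep_vcHyp_iff, isVertexCover_iff_isIndepSet_compl] using isIndepSet_pair hnac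
  · simpa [hypDep_vcHyp_iff, isVertexCover_iff_isIndepSet_compl] using isIndepSet_pair hnbd
  · simp only [chiVec, Finset.mem_compl, Finset.mem_insert, Finset.mem_singleton]
    split_ifs <;> grind

theorem not_hasAltFourCycle_of_oneSperner (h : OneSperner (VCHyp G)) : ¬ HasAltFourCycle G := by
  rintro ⟨a, b, c, d, hab, hcd, hac, hbd, hnac, hnbd⟩
  obtain ⟨M₁, hacM₁, hM₁⟩ := Finite.exists_le_maximal (a := ({a, c} : Finset V))
    (p := fun X : Finset V => G.IsIndepSet (X : Set V)) (by simpa using isIndepSet_pair hnac)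
  obtain ⟨M₂, hbdM₂, hM₂⟩ := Finite.exists_le_maximal (a := ({b, d} : Finset V))
    (p := fun X : Finset V => G.IsIndepSet (X : Set V)) (by simpa using isIndepSet_pair hnbd)
  have ha₁ : a ∈ M₁ := hacM₁ (by simp)
  have hc₁ : c ∈ M₁ := hacM₁ (by simp)
  have hb₂ : b ∈ M₂ := hbdM₂ (by simp)
  have hd₂ : d ∈ M₂ := hbdM₂ (by simp)
  have hbd_mem : b ∈ M₁ᶜ \ M₂ᶜ ∧ d ∈ M₁ᶜ \ M₂ᶜ := by
    simp [hb₂, hd₂, notMem_of_isIndepSet_of_adj hM₁.prop ha₁ hab,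
      notMem_of_isIndepSet_of_adj hM₁.prop hc₁ hcd]
  have hac_mem : a ∈ M₂ᶜ \ M₁ᶜ ∧ c ∈ M₂ᶜ \ M₁ᶜ := by
    simp [ha₁, hc₁, notMem_of_isIndepSet_of_adj hM₂.prop hb₂ hab.symm,
      notMem_of_isIndepSet_of_adj hM₂.prop hd₂ hcd.symm]
  have hne : M₁ᶜ ≠ M₂ᶜ := fun hM => by simp [hM] at hbd_mem
  have h₁ : 1 < #(M₁ᶜ \ M₂ᶜ) := Finset.one_lt_card.2 ⟨b, hbd_mem.1, d, hbd_mem.2, hbd⟩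
  have h₂ : 1 < #(M₂ᶜ \ M₁ᶜ) := Finset.one_lt_card.2 ⟨a, hac_mem.1, c, hac_mem.2, hac⟩
  have := h _ (compl_mem_vcHyp hM₁) _ (compl_mem_vcHyp hM₂) hne
  omega

theorem oneSperner_vcHyp_of_not_hasAltFourCycle (hG : ¬ HasAltFourCycle G) :
    OneSperner (VCHyp G) := by
  intro e he f hf hne
  have h₁ := (sdiff_nonempty_of_mem_vcHyp hf he hne).card_pos
  have h₂ := (sdiff_nonempty_of_mem_vcHyp he hf hne.symm).card_pos
  have : ¬ (1 < #(f \ e) ∧ 1 < #(e \ f)) := fun ⟨hP, hQ⟩ =>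
    hG (hasAltFourCycle_of_one_lt_card (isIndepSet_sdiff_of_isVertexCover he.1 f)
      (isIndepSet_sdiff_of_isVertexCover hf.1 e)
      (fun _ hx => exists_adj_mem_sdiff_of_mem_vcHyp he hf hx)
      (fun _ hy => exists_adj_mem_sdiff_of_mem_vcHyp hf he hy) hP hQ)
  omega

end AltFourCycle

section ThresholdConstruction

variable {V : Type*} {G : SimpleGraph V}

theorem exists_isolated_or_dominating (hG : ¬ HasAltFourCycle G) {S : Finset V}
    (hS : S.Nonempty) :
    ∃ v ∈ S, (∀ u ∈ S, ¬ G.Adj v u) ∨ ∀ u ∈ S, u ≠ v → G.Adj v u := by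
  by_cases hiso : ∃ v ∈ S, ∀ u ∈ S, ¬ G.Adj v u
  · obtain ⟨v, hv, hiso⟩ := hiso
    exact ⟨v, hv, Or.inl hiso⟩
  push Not at hiso
  -- A vertex of maximum degree within `S` is dominating.
  set N : V → Finset V := fun x => S.filter (G.Adj x)
  obtain ⟨v, hvS, hvmax⟩ := Finset.exists_max_image S (fun x => #(N x)) hS
  refine ⟨v, hvS, Or.inr fun u huS huv => ?_⟩
  by_contra hvu
  obtain ⟨y, hyS, huy⟩ := hiso u huS
  -- Otherwise `u, y, v, z` would be an alternating 4-cycle for every `z ∈ N v \ {y}`.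
  have hsub : insert u (N v \ {y}) ⊆ N y \ {v} := by
    refine Finset.insert_subset (by simp [N, huS, huy.symm, huv]) fun z hz => ?_
    simp only [N, Finset.mem_sdiff, Finset.mem_filter, Finset.mem_singleton] at hz ⊢
    refine ⟨⟨hz.1.1, by_contra fun hyz => hG ⟨u, y, v, z, huy, hz.1.2, huv, Ne.symm hz.2,
      fun h => hvu h.symm, hyz⟩⟩, (G.ne_of_adj hz.1.2).symm⟩
  have hlt : #(N v \ {y}) < #(N y \ {v}) := by
    refine lt_of_lt_of_le ?_ (Finset.card_le_card hsub)
    rw [Finset.card_insert_of_notMem (by simp [N, hvu])]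
    omega
  have hinter : #(N v ∩ {y}) = #(N y ∩ {v}) := by
    by_cases hvy : G.Adj v y <;> simp [N, G.adj_comm y v, hvy, hyS, hvS]
  have := Finset.card_sdiff_add_card_inter (N v) {y}
  have := Finset.card_sdiff_add_card_inter (N y) {v}
  have := hvmax y hyS
  omega

variable [DecidableEq V]

theorem isIndepSet_iff_erase_of_forall_not_adj {X : Finset V} {v : V}
    (hv : ∀ u ∈ X, ¬ G.Adj v u) :
    G.IsIndepSet (X : Set V) ↔ G.IsIndepSet (↑(X.erase v) : Set V) := by
  refine ⟨fun h => h.mono (Finset.coe_subset.2 (Finset.erase_subset v X)),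
    fun h a ha b hb hab hadj => ?_⟩
  rcases eq_or_ne a v with rfl | hav
  · exact hv b hb hadj
  rcases eq_or_ne b v with rfl | hbv
  · exact hv a ha hadj.symm
  exact h (Finset.mem_erase.2 ⟨hav, ha⟩) (Finset.mem_erase.2 ⟨hbv, hb⟩) hab hadj

theorem isIndepSet_iff_erase_eq_empty_of_forall_adj {X : Finset V} {v : V} (hvX : v ∈ X)
    (hv : ∀ u ∈ X, u ≠ v → G.Adj v u) :
    G.IsIndepSet (X : Set V) ↔ X.erase v = ∅ := by
  refine ⟨fun h => Finset.eq_empty_of_forall_notMem fun u hu => ?_, fun h a ha b hb hab _ => ?_⟩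
  · obtain ⟨huv, hu⟩ := Finset.mem_erase.1 hu
    exact h hvX hu huv.symm (hv u hu huv)
  · have hX : ∀ u ∈ X, u = v := fun u hu =>
      by_contra fun huv => by simpa [h] using Finset.mem_erase.2 ⟨huv, hu⟩
    exact hab ((hX a ha).trans (hX b hb).symm)

theorem sum_update_two_mul (w : V → ℕ) (v : V) (c : ℕ) (X : Finset V) :
    ∑ x ∈ X, Function.update (fun x => 2 * w x) v c x =
      (if v ∈ X then c else 0) + 2 * ∑ x ∈ X.erase v, w x := by
  split_ifs with hv
  · rw [Finset.sum_update_of_mem hv, Finset.sdiff_singleton_eq_erase, Finset.mul_sum]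
  · rw [Finset.sum_update_of_notMem hv, Finset.erase_eq_of_notMem hv, Finset.mul_sum, zero_add]

/-- Chvátal–Hammer: remove an isolated or dominating vertex, realise the rest, double its weights,
and give the removed vertex weight `1`, resp. the new threshold `2t + 1`. -/
theorem exists_pos_weights_isIndepSet_iff (hG : ¬ HasAltFourCycle G) (S : Finset V) :
    ∃ (w : V → ℕ) (t : ℕ), (∀ v, 0 < w v) ∧
      ∀ X ⊆ S, (∑ x ∈ X, w x ≤ t ↔ G.IsIndepSet (X : Set V)) := by
  induction S using Finset.strongInduction with
  | H S ih =>
  rcases S.eq_empty_or_nonempty with rfl | hS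
  · exact ⟨1, 0, fun _ => one_pos, fun X hX => by simp [Finset.subset_empty.1 hX]⟩
  obtain ⟨v, hvS, hv⟩ := exists_isolated_or_dominating hG hS
  obtain ⟨w, t, hwpos, hw⟩ := ih (S.erase v) (Finset.erase_ssubset hvS)
  rcases hv with hiso | hdom
  · refine ⟨Function.update (fun x => 2 * w x) v 1, 2 * t + 1, ?_, fun X hX => ?_⟩
    · intro x
      rcases eq_or_ne x v with rfl | hx <;> simp [*]
    · rw [sum_update_two_mul, isIndepSet_iff_erase_of_forall_not_adj fun u hu => hiso u (hX hu),
        ← hw _ (Finset.erase_subset_erase v hX)]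
      split_ifs <;> omega
  · refine ⟨Function.update (fun x => 2 * w x) v (2 * t + 1), 2 * t + 1, ?_, fun X hX => ?_⟩
    · intro x
      rcases eq_or_ne x v with rfl | hx <;> simp [*]
    · rw [sum_update_two_mul]
      by_cases hvX : v ∈ X
      · have hzero : ∑ x ∈ X.erase v, w x = 0 ↔ X.erase v = ∅ := by
          simp [Finset.sum_eq_zero_iff, (hwpos _).ne', Finset.eq_empty_iff_forall_notMem]
        rw [if_pos hvX, isIndepSet_iff_erase_eq_empty_of_forall_adj hvX fun u hu => hdom u (hX hu),
          ← hzero]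
        omega
      · rw [if_neg hvX, Finset.erase_eq_of_notMem hvX, ← hw X (Finset.subset_erase.2 ⟨hX, hvX⟩)]
        omega

theorem thresholdGraph_of_not_hasAltFourCycle [Fintype V] (hG : ¬ HasAltFourCycle G) :
    ThresholdGraph G := by
  obtain ⟨w, t, -, hw⟩ := exists_pos_weights_isIndepSet_iff hG Finset.univ
  exact ⟨w, t, fun X => (hw X (Finset.subset_univ X)).trans isIndepSet_coe_iff⟩

end ThresholdConstruction

theorem stmt0 {V : Type*} [Fintype V] [DecidableEq V] (G : SimpleGraph V) :
    [ThresholdGraph G, OneSperner (VCHyp G), HypThreshold (VCHyp G),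
      TwoAsummable (VCHyp G)].TFAE := by
  tfae_have 1 ↔ 3 := thresholdGraph_iff_hypThreshold_vcHyp
  tfae_have 3 → 4 := HypThreshold.twoAsummable
  tfae_have 4 → 2 := fun h =>
    oneSperner_vcHyp_of_not_hasAltFourCycle (not_hasAltFourCycle_of_twoAsummable h)
  tfae_have 2 → 1 := fun h =>
    thresholdGraph_of_not_hasAltFourCycle (not_hasAltFourCycle_of_oneSperner h)
  tfae_finish
end

section
/- Let H₁ = (V₁, E₁) and H₂ = (V₂, E₂) be vertex-disjoint hypergraphs and let z ∉ V₁ ∪ V₂. If the gluing H₁ ⊙ H₂ of H₁ and H₂ (with respect to the new vertex z) is a 1-Sperner hypergraph, then both H₁ and H₂ are 1-Sperner. -/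
open Finset

open scoped Classical

/-! Gluing shifts every hyperedge of `H₁` by the fresh vertex `z` and every hyperedge of `H₂` by
the whole of `V₁`; since the added part is disjoint from the hyperedges it is added to, the
differences `e \ f` are unchanged, so the 1-Sperner condition transfers back. -/

theorem union_sdiff_union_of_disjoint {V : Type*} [DecidableEq V] {A e f : Finset V}
    (he : Disjoint A e) : (A ∪ e) \ (A ∪ f) = e \ f := by
  ext x
  have : x ∈ A → x ∉ e := fun hA => Finset.disjoint_left.mp he hA
  simp only [Finset.mem_sdiff, Finset.mem_union]
  tauto

theorem insert_sdiff_insert_of_notMem {V : Type*} [DecidableEq V] {z : V} {e f : Finset V}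
    (he : z ∉ e) : insert z e \ insert z f = e \ f := by
  simpa only [Finset.insert_eq] using
    union_sdiff_union_of_disjoint (f := f) (Finset.disjoint_singleton_left.mpr he)

theorem OneSperner.of_sdiff_eq {V : Type*} [DecidableEq V] {E F : Set (Finset V)}
    (hF : OneSperner F) (φ : Finset V → Finset V) (hφ : ∀ e ∈ E, φ e ∈ F)
    (hsdiff : ∀ e ∈ E, ∀ f ∈ E, φ e \ φ f = e \ f) : OneSperner E := by
  intro e he f hf hef
  have hφef : φ e ≠ φ f := by
    intro h
    refine hef (Finset.Subset.antisymm ?_ ?_)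
    · rw [← Finset.sdiff_eq_empty_iff_subset, ← hsdiff e he f hf, h, Finset.sdiff_self]
    · rw [← Finset.sdiff_eq_empty_iff_subset, ← hsdiff f hf e he, h, Finset.sdiff_self]
  simpa only [hsdiff e he f hf, hsdiff f hf e he] using
    hF (φ e) (hφ e he) (φ f) (hφ f hf) hφef

theorem stmt18 {V : Type*} [DecidableEq V] (V₁ V₂ : Finset V) (z : V)
    (E₁ E₂ : Set (Finset V))
    (hE₁ : ∀ e ∈ E₁, e ⊆ V₁) (hE₂ : ∀ e ∈ E₂, e ⊆ V₂)
    (hdisj : Disjoint V₁ V₂) (hz : z ∉ V₁ ∪ V₂)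
    (hglue : OneSperner
      ({g | ∃ e ∈ E₁, g = insert z e} ∪ {g | ∃ e ∈ E₂, g = V₁ ∪ e})) :
    OneSperner E₁ ∧ OneSperner E₂ := by
  have hzE₁ : ∀ e ∈ E₁, z ∉ e := fun e he hze =>
    hz (Finset.mem_union_left _ (hE₁ e he hze))
  have hV₁E₂ : ∀ e ∈ E₂, Disjoint V₁ e := fun e he =>
    hdisj.mono_right (hE₂ e he)
  constructor
  · exact hglue.of_sdiff_eq (insert z) (fun e he => Or.inl ⟨e, he, rfl⟩)
      fun e he f _ => insert_sdiff_insert_of_notMem (hzE₁ e he)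
  · exact hglue.of_sdiff_eq (V₁ ∪ ·) (fun e he => Or.inr ⟨e, he, rfl⟩)
      fun e he f _ => union_sdiff_union_of_disjoint (hV₁E₂ e he)
end
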